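/- For each k ≥ 0 and prime power q, if M is obtained from a GF(q)-representable matroid by k truncations, then ε(M) ≤ (q^{r(M)+k} - 1)/(q - 1); and the truncation to rank n of PG(n+k-1, q) achieves equality, i.e., has exactly (q^{n+k} - 1)/(q - 1) points for n ≥ 2. -/

import Mathlib

open Matroid Set

namespace GrowthRate

variable {α : Type*}

/-- The rank of a set in a matroid: the supremum of cardinalities of independent subsets. -/
noncomputable def eRk (M : Matroid α) (X : Set α) : ℕ∞ :=
  ⨆ I ∈ {I : Set α | M.Indep I ∧ I ⊆ X}, I.encard

/-- The rank of a matroid. -/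
noncomputable def eRank (M : Matroid α) : ℕ∞ := eRk M M.E

/-- Rank as a natural number (for finite matroids). -/
noncomputable def rk (M : Matroid α) (X : Set α) : ℕ := (eRk M X).toNat

/-- Rank of a matroid as a natural number. -/
noncomputable def rank (M : Matroid α) : ℕ := (eRank M).toNat

/-- Deletion of a set of elements. -/
noncomputable def delete (M : Matroid α) (D : Set α) : Matroid α := M ↾ (M.E \ D)

/-- Contraction of a set of elements, defined via duality. -/
noncomputable def contract (M : Matroid α) (C : Set α) : Matroid α := (delete M✶ C)✶

/-- `N` is a minor of `M` if it is obtained by a contraction followed by a deletion. -/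
def IsMinor (N M : Matroid α) : Prop := ∃ C D : Set α, N = delete (contract M C) D

/-- The number of points (rank-one flats) of `M` contained in `X`. -/
noncomputable def nPoints (M : Matroid α) (X : Set α) : ℕ :=
  {P : Set α | M.IsFlat P ∧ eRk M P = 1 ∧ P ⊆ X}.ncard

/-- `ε(M)`: the number of points (rank-one flats) of `M`. -/
noncomputable def eps (M : Matroid α) : ℕ := {P : Set α | M.IsFlat P ∧ eRk M P = 1}.ncard

/-- A matroid is simple if all singletons and pairs of ground elements are independent. -/
def Simple (M : Matroid α) : Prop :=
  ∀ e ∈ M.E, ∀ f ∈ M.E, M.Indep {e} ∧ (e ≠ f → M.Indep {e, f})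

/-- `M` has a `U_{2,m}`-minor: a minor that is simple of rank two with `m` elements. -/
def HasUnifLineMinor (M : Matroid α) (m : ℕ) : Prop :=
  ∃ N : Matroid α, IsMinor N M ∧ eRank N = 2 ∧ Simple N ∧ N.E.encard = m

/-- A matroid is weakly round if its ground set is not the union of a set of rank
at most `r(M)-2` and a set of rank at most `r(M)-1`. -/
def WeaklyRound (M : Matroid α) : Prop :=
  ¬ ∃ A B : Set α, A ∪ B = M.E ∧ eRk M A + 2 ≤ eRank M ∧ eRk M B + 1 ≤ eRank M

/-- `q` is a prime power. -/
def IsPrimePower (q : ℕ) : Prop := ∃ p n : ℕ, p.Prime ∧ 0 < n ∧ q = p ^ n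

/-- `M` is isomorphic to the projective geometry `PG(n-1, |F|)` over the finite field `F`:
there is a representation `f` of `M` by vectors in `F^n` such that distinct elements get
non-parallel vectors and every direction in `F^n` is represented. -/
def IsPG (M : Matroid α) (F : Type) [Field F] [Fintype F] (n : ℕ) : Prop :=
  ∃ f : α → (Fin n → F),
    (∀ I ⊆ M.E, (M.Indep I ↔ LinearIndependent F (fun x : I => f x))) ∧
    (∀ e ∈ M.E, ∀ e' ∈ M.E, ∀ c : F, f e' = c • f e → e = e') ∧
    (∀ v : Fin n → F, v ≠ 0 → ∃ e ∈ M.E, ∃ c : F, c ≠ 0 ∧ v = c • f e)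

/-- `M` is `(q,k)`-overfull. -/
noncomputable def Overfull (M : Matroid α) (q k : ℕ) : Prop :=
  ((q : ℚ) ^ (rank M + k) - 1) / ((q : ℚ) - 1)
      - (q : ℚ) * ((q : ℚ) ^ (2 * k) - 1) / ((q : ℚ) ^ 2 - 1) < (eps M : ℚ)

/-- `N` is the truncation of `M`. -/
def IsTruncationOf (N M : Matroid α) : Prop :=
  N.E = M.E ∧ ∀ X ⊆ M.E, eRk N X = min (eRk M X) (eRank M - 1)

/-- `M` is representable over the field `F`. -/
def IsRepresentable (M : Matroid α) (F : Type) [Field F] : Prop :=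
  ∃ (n : ℕ) (f : α → (Fin n → F)),
    ∀ I ⊆ M.E, (M.Indep I ↔ LinearIndependent F (fun x : I => f x))

/-- `M` is obtained from `M₀` by `k` successive truncations. -/
def IsKFoldTruncationOf (M M₀ : Matroid α) (k : ℕ) : Prop :=
  ∃ g : ℕ → Matroid α, g 0 = M₀ ∧ (∀ i < k, IsTruncationOf (g (i + 1)) (g i)) ∧ g k = M


/-!
If `r(M) ≥ 2`, each of the `k` truncations leading from `M₀` to `M` acts on a matroid of rank at
least `3`, where it changes neither the points nor the rank-two sets through them; so `M` has the
points of `M₀`, and `r(M₀) = r(M) + k`. For a representation `f` of `M₀` in `V`, the map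
`P ↦ span (f P)` is injective on flats and sends points to lines. Taking `V` to be the span of the
representing vectors, `dim V = r(M₀)`, and `V` has `(q ^ r(M₀) - 1) / (q - 1)` lines. For
`PG(n + k - 1, q)` every line of `Fᵐ` is hit, which gives equality. Matroids of rank at most one
have at most one point.
-/

lemma eRk_eq_matroid_eRk (M : Matroid α) (X : Set α) : eRk M X = M.eRk X := by
  refine le_antisymm (iSup₂_le fun I hI => hI.1.encard_le_eRk_of_subset hI.2) ?_
  obtain ⟨I, hI⟩ := M.exists_isBasis' X
  rw [← hI.encard_eq_eRk]
  exact le_biSup Set.encard ⟨hI.indep, hI.subset⟩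

lemma eRank_eq_matroid_eRank (M : Matroid α) : eRank M = M.eRank := by
  rw [eRank, eRk_eq_matroid_eRk, eRank_def]

lemma rank_eq_toNat_eRank (M : Matroid α) : rank M = M.eRank.toNat := by
  rw [rank, eRank_eq_matroid_eRank]

def points (M : Matroid α) : Set (Set α) := {P | M.IsFlat P ∧ M.eRk P = 1}

lemma eps_eq_ncard_points (M : Matroid α) : eps M = (points M).ncard := by
  simp only [eps, points, eRk_eq_matroid_eRk]

lemma mem_points_iff {M : Matroid α} {P : Set α} :
    P ∈ points M ↔ P ⊆ M.E ∧ M.eRk P = 1 ∧ ∀ e ∈ M.E \ P, 1 < M.eRk (insert e P) := by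
  constructor
  · rintro ⟨hP, h1⟩
    refine ⟨hP.subset_ground, h1, fun e he => ?_⟩
    rw [eRk_insert_eq_add_one (by rwa [hP.closure]), h1]
    norm_num
  · rintro ⟨hPE, h1, hins⟩
    refine ⟨isFlat_iff_closure_eq.2 (subset_antisymm (fun e he => by_contra fun heP => ?_)
      (M.subset_closure P hPE)), h1⟩
    have hle : M.eRk (insert e P) ≤ M.eRk P :=
      (M.eRk_mono (insert_subset he (M.subset_closure P hPE))).trans (M.eRk_closure_eq P).le
    exact (hins e ⟨M.closure_subset_ground P he, heP⟩).not_ge (hle.trans h1.le)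

lemma points_subset_singleton_ground {M : Matroid α} (h : M.eRank ≤ 1) :
    points M ⊆ {M.E} := by
  rintro P ⟨hP, h1⟩
  have hfin : M.IsRkFinite P := eRk_ne_top_iff.1 (by simp [h1])
  rw [mem_singleton_iff, ← hP.closure, ← M.closure_ground]
  exact hfin.closure_eq_closure_of_subset_of_eRk_ge_eRk hP.subset_ground (by
    rw [eRk_ground, h1]; exact h)

lemma ncard_points_le_toNat_eRank {M : Matroid α} (h : M.eRank ≤ 1) :
    (points M).ncard ≤ M.eRank.toNat := by
  rcases Order.le_one_iff.1 h with h0 | h1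
  · have : points M = ∅ := eq_empty_of_forall_notMem fun P hP => by
      simpa [hP.2, h0] using M.eRk_le_eRank P
    simp [this]
  · rw [h1]
    exact (ncard_le_ncard (points_subset_singleton_ground h)).trans (ncard_singleton _).le

section Truncation

variable {M N M₀ : Matroid α} {k : ℕ}

lemma IsTruncationOf.eRk_eq (h : IsTruncationOf N M) {X : Set α} (hX : X ⊆ M.E) :
    N.eRk X = min (M.eRk X) (M.eRank - 1) := by
  simpa only [eRk_eq_matroid_eRk, eRank_eq_matroid_eRank] using h.2 X hX

lemma IsTruncationOf.eRank_eq (h : IsTruncationOf N M) : N.eRank = M.eRank - 1 := by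
  rw [eRank_def, h.1, h.eRk_eq subset_rfl, ← eRank_def, min_eq_right tsub_le_self]

/-- Truncation only changes ranks above `r(M) - 1 ≥ 2`, while `mem_points_iff` recognises a point
through ranks `1` and `2` alone. -/
lemma IsTruncationOf.points_eq (h : IsTruncationOf N M) (hr : 3 ≤ M.eRank) :
    points N = points M := by
  have h2 : (2 : ℕ∞) ≤ M.eRank - 1 := by
    generalize M.eRank = r at hr ⊢
    induction r using ENat.recTopCoe with
    | top => simp
    | coe r => norm_cast at *; omega
  have min_eq_one {a : ℕ∞} : min a (M.eRank - 1) = 1 ↔ a = 1 := by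
    rcases le_total a (M.eRank - 1) with ha | ha
    · rw [min_eq_left ha]
    · rw [min_eq_right ha]
      have h1 : ¬ M.eRank - 1 ≤ 1 := fun h1 => by simpa using h2.trans h1
      exact ⟨fun ha1 => absurd ha1.le h1, fun ha1 => absurd (ha1 ▸ ha) h1⟩
  ext P
  rw [mem_points_iff, mem_points_iff, h.1]
  refine and_congr_right fun hP => ?_
  rw [h.eRk_eq hP, min_eq_one]
  refine and_congr_right fun _ => forall₂_congr fun e he => ?_
  rw [h.eRk_eq (insert_subset he.1 hP), lt_min_iff]
  exact and_iff_left ((by norm_num : (1 : ℕ∞) < 2).trans_le h2)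

lemma IsKFoldTruncationOf.eq_of_zero (h : IsKFoldTruncationOf M M₀ 0) : M = M₀ := by
  obtain ⟨g, h0, -, hk⟩ := h
  rw [← hk, h0]

lemma IsKFoldTruncationOf.exists_of_succ (h : IsKFoldTruncationOf M M₀ (k + 1)) :
    ∃ N, IsKFoldTruncationOf N M₀ k ∧ IsTruncationOf M N := by
  obtain ⟨g, h0, hs, hk⟩ := h
  exact ⟨g k, ⟨g, h0, fun i hi => hs i (by omega), rfl⟩, hk ▸ hs k k.lt_succ_self⟩

lemma IsKFoldTruncationOf.eRank_eq (h : IsKFoldTruncationOf M M₀ k) :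
    M.eRank = M₀.eRank - k := by
  induction k generalizing M with
  | zero => rw [h.eq_of_zero]; simp
  | succ k ih =>
    obtain ⟨N, hN, hMN⟩ := h.exists_of_succ
    rw [hMN.eRank_eq, ih hN, tsub_tsub]
    norm_cast

lemma IsKFoldTruncationOf.rank_eq_add (h : IsKFoldTruncationOf M M₀ k) (hM₀ : M₀.eRank ≠ ⊤)
    (h1 : 1 ≤ M.eRank) : rank M₀ = rank M + k := by
  rw [rank_eq_toNat_eRank, rank_eq_toNat_eRank, h.eRank_eq]
  rw [h.eRank_eq] at h1
  lift M₀.eRank to ℕ using hM₀ with r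
  norm_cast at h1 ⊢
  simp only [ENat.toNat_natCast]
  omega

lemma IsKFoldTruncationOf.points_eq (h : IsKFoldTruncationOf M M₀ k) (h2 : 2 ≤ M.eRank) :
    points M = points M₀ := by
  induction k generalizing M with
  | zero => rw [h.eq_of_zero]
  | succ k ih =>
    obtain ⟨N, hN, hMN⟩ := h.exists_of_succ
    have h3 : 3 ≤ N.eRank := by
      rw [hMN.eRank_eq] at h2
      generalize N.eRank = r at h2 ⊢
      induction r using ENat.recTopCoe with
      | top => simp
      | coe r => norm_cast at *; omega
    rw [hMN.points_eq h3, ih hN ((by norm_num : (2 : ℕ∞) ≤ 3).trans h3)]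

end Truncation

def IsRep (F : Type*) {V : Type*} [Field F] [AddCommGroup V] [Module F V] (M : Matroid α)
    (f : α → V) : Prop :=
  ∀ I ⊆ M.E, M.Indep I ↔ LinearIndepOn F f I

section Representation

open Module Submodule

variable {F V : Type*} [Field F] [AddCommGroup V] [Module F V]
  {M : Matroid α} {f : α → V} {I X : Set α} {e : α}

lemma IsRep.mem_closure_iff_of_indep (h : IsRep F M f) (hI : M.Indep I) :
    e ∈ M.closure I ↔ e ∈ M.E ∧ f e ∈ span F (f '' I) := by
  by_cases heI : e ∈ I
  · exact iff_of_true (M.subset_closure I hI.subset_ground heI)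
      ⟨hI.subset_ground heI, subset_span (mem_image_of_mem f heI)⟩
  by_cases he : e ∈ M.E
  · have hins := hI.insert_indep_iff_of_notMem heI
    rw [h _ (insert_subset he hI.subset_ground), linearIndepOn_insert heI,
      ← h I hI.subset_ground] at hins
    rw [and_iff_right he]
    exact not_iff_not.1 (by simpa [he, hI] using hins.symm)
  · exact iff_of_false (fun hcl => he (M.closure_subset_ground I hcl)) (fun h' => he h'.1)

lemma IsRep.span_image_eq_of_isBasis (h : IsRep F M f) (hI : M.IsBasis I X) :
    span F (f '' I) = span F (f '' X) := by
  refine le_antisymm (span_mono (image_mono hI.subset)) (span_le.2 ?_)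
  rintro - ⟨x, hx, rfl⟩
  exact ((h.mem_closure_iff_of_indep hI.indep).1 (hI.subset_closure hx)).2

lemma IsRep.mem_closure_iff (h : IsRep F M f) (hX : X ⊆ M.E) :
    e ∈ M.closure X ↔ e ∈ M.E ∧ f e ∈ span F (f '' X) := by
  obtain ⟨I, hI⟩ := M.exists_isBasis X hX
  rw [← hI.closure_eq_closure, ← h.span_image_eq_of_isBasis hI,
    h.mem_closure_iff_of_indep hI.indep]

lemma IsRep.finrank_span_image [FiniteDimensional F V] (h : IsRep F M f) (hX : X ⊆ M.E) :
    (finrank F (span F (f '' X)) : ℕ∞) = M.eRk X := by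
  obtain ⟨I, hI⟩ := M.exists_isBasis X hX
  have hli : LinearIndepOn F f I := (h I hI.indep.subset_ground).1 hI.indep
  have : Fintype I := @Fintype.ofFinite _ hli.finite_of_isNoetherian
  rw [← h.span_image_eq_of_isBasis hI, ← hI.encard_eq_eRk, image_eq_range,
    finrank_span_eq_card hli, encard_eq_coe_toFinset_card, toFinset_card]

lemma IsRep.finrank_eq_eRank [FiniteDimensional F V] (h : IsRep F M f)
    (hsp : span F (f '' M.E) = ⊤) : (finrank F V : ℕ∞) = M.eRank := by
  rw [← eRk_ground, ← h.finrank_span_image subset_rfl, hsp, finrank_top]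

lemma IsRep.injOn_span_image (h : IsRep F M f) :
    InjOn (fun P => span F (f '' P)) {P | M.IsFlat P} := by
  intro P hP Q hQ hPQ
  ext e
  rw [← hP.closure, ← hQ.closure, h.mem_closure_iff hP.subset_ground,
    h.mem_closure_iff hQ.subset_ground]
  simp only at hPQ
  rw [hPQ]

lemma IsRep.finrank_span_image_of_mem_points [FiniteDimensional F V] (h : IsRep F M f)
    {P : Set α} (hP : P ∈ points M) : finrank F (span F (f '' P)) = 1 := by
  have := h.finrank_span_image hP.1.subset_ground
  rw [hP.2] at this
  exact_mod_cast this

lemma IsRep.exists_isRep_span (h : IsRep F M f) :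
    ∃ g : α → span F (f '' M.E), IsRep F M g ∧ span F (g '' M.E) = ⊤ := by
  classical
  set W := span F (f '' M.E)
  let g : α → W := fun x =>
    if hx : x ∈ M.E then ⟨f x, subset_span (mem_image_of_mem f hx)⟩ else 0
  have hgf : EqOn (W.subtype ∘ g) f M.E := fun x hx => by simp [g, hx]
  refine ⟨g, fun I hI => ?_, ?_⟩
  · rw [h I hI, ← linearIndepOn_congr (hgf.mono hI),
      W.subtype.linearIndepOn_iff_of_injOn W.injective_subtype.injOn]
  · convert span_span_coe_preimage (R := F) (s := f '' M.E)
    ext ⟨v, hv⟩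
    constructor
    · rintro ⟨x, hx, hxv⟩
      exact ⟨x, hx, by simpa [g, hx] using congrArg Subtype.val hxv⟩
    · rintro ⟨x, hx, hxv⟩
      exact ⟨x, hx, Subtype.ext (by simp [g, hx, hxv])⟩

lemma span_image_eq_top_of_forall_smul {s : Set α}
    (hsurj : ∀ v : V, v ≠ 0 → ∃ e ∈ s, ∃ c : F, c ≠ 0 ∧ v = c • f e) :
    span F (f '' s) = ⊤ := by
  refine eq_top_iff.2 fun v _ => ?_
  obtain rfl | hv := eq_or_ne v 0
  · exact zero_mem _
  obtain ⟨e, he, c, -, rfl⟩ := hsurj v hv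
  exact smul_mem _ c (subset_span (mem_image_of_mem f he))

lemma finite_setOf_finrank_eq_one [Finite F] [FiniteDimensional F V] :
    {H : Submodule F V | finrank F H = 1}.Finite :=
  have : Finite V := Module.finite_of_finite F
  Set.finite_coe_iff.1 (Finite.of_equiv _ (Projectivization.equivSubmodule F V))

lemma ncard_setOf_finrank_eq_one [Finite F] :
    {H : Submodule F V | finrank F H = 1}.ncard =
      ∑ i ∈ Finset.range (finrank F V), Nat.card F ^ i := by
  rw [← Nat.card_coe_set_eq, ← Projectivization.card_of_finrank F V rfl]
  exact (Nat.card_congr (Projectivization.equivSubmodule F V)).symm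

lemma IsRep.ncard_points_le [Finite F] [FiniteDimensional F V] (h : IsRep F M f) :
    (points M).ncard ≤ {H : Submodule F V | finrank F H = 1}.ncard :=
  ncard_le_ncard_of_injOn _ (fun _ hP => h.finrank_span_image_of_mem_points hP)
    (h.injOn_span_image.mono fun _ hP => hP.1) finite_setOf_finrank_eq_one

lemma IsRep.ncard_points_eq [FiniteDimensional F V] (h : IsRep F M f)
    (hsurj : ∀ v : V, v ≠ 0 → ∃ e ∈ M.E, ∃ c : F, c ≠ 0 ∧ v = c • f e) :
    (points M).ncard = {H : Submodule F V | finrank F H = 1}.ncard := by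
  refine BijOn.ncard_eq ⟨fun _ hP => h.finrank_span_image_of_mem_points hP,
    h.injOn_span_image.mono fun _ hP => hP.1, fun H hH => ?_⟩
  obtain ⟨e, he, c, hc, hv⟩ := hsurj _ (Projectivization.mk'' H hH).rep_nonzero
  have hind : M.Indep {e} := by
    rw [h _ (singleton_subset_iff.2 he), linearIndepOn_singleton_iff]
    rintro h0
    exact Projectivization.rep_nonzero _ (by rw [hv, h0, smul_zero])
  refine ⟨M.closure {e}, ⟨M.isFlat_closure _, ?_⟩, ?_⟩
  · rw [eRk_closure_eq, hind.eRk_eq_encard, encard_singleton]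
  · show span F (f '' M.closure {e}) = H
    rw [← h.span_image_eq_of_isBasis hind.isBasis_closure, image_singleton,
      ← span_singleton_smul_eq hc.isUnit, ← hv, ← Projectivization.submodule_eq,
      Projectivization.submodule_mk'']

end Representation

lemma cast_sum_range_pow {q : ℕ} (hq : 1 < q) (n : ℕ) :
    ((∑ i ∈ Finset.range n, q ^ i : ℕ) : ℚ) = ((q : ℚ) ^ n - 1) / ((q : ℚ) - 1) := by
  push_cast
  exact geom_sum_eq (by exact_mod_cast hq.ne') n

lemma le_sum_range_pow {q : ℕ} (hq : 1 ≤ q) (n : ℕ) : n ≤ ∑ i ∈ Finset.range n, q ^ i :=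
  calc n = ∑ _i ∈ Finset.range n, 1 := by simp
    _ ≤ ∑ i ∈ Finset.range n, q ^ i := Finset.sum_le_sum fun i _ => Nat.one_le_pow _ _ hq

/-- If `M` is obtained from a `GF(q)`-representable matroid by `k` truncations then
`ε(M) ≤ (q^(r(M)+k)-1)/(q-1)`; and the truncation to rank `n ≥ 2` of `PG(n+k-1,q)`
has exactly `(q^(n+k)-1)/(q-1)` points. -/
theorem statement_16 {α : Type*} (F : Type) [Field F] [Fintype F] (k : ℕ) :
    (∀ (M M₀ : Matroid α), M.Finite → IsRepresentable M₀ F →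
      IsKFoldTruncationOf M M₀ k →
      (eps M : ℚ) ≤ ((Fintype.card F : ℚ) ^ (rank M + k) - 1) / ((Fintype.card F : ℚ) - 1)) ∧
    (∀ (M P : Matroid α) (n : ℕ), 2 ≤ n → M.Finite → IsPG P F (n + k) →
      IsKFoldTruncationOf M P k →
      (eps M : ℚ) = ((Fintype.card F : ℚ) ^ (n + k) - 1) / ((Fintype.card F : ℚ) - 1)) := by
  have hq : 1 < Nat.card F := Finite.one_lt_card
  simp only [← Nat.card_eq_fintype_card, ← cast_sum_range_pow hq, eps_eq_ncard_points,
    Nat.cast_le, Nat.cast_inj]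
  refine ⟨fun M M₀ _ ⟨m, f, hf⟩ hk => ?_, fun M P n hn _ ⟨f, hf, _, hsurj⟩ hk => ?_⟩
  · rcases le_or_gt M.eRank 1 with hle | hgt
    · calc (points M).ncard ≤ rank M := by
            rw [rank_eq_toNat_eRank]
            exact ncard_points_le_toNat_eRank hle
        _ ≤ rank M + k := Nat.le_add_right _ _
        _ ≤ _ := le_sum_range_pow hq.le _
    · obtain ⟨g, hg, hsp⟩ := IsRep.exists_isRep_span (F := F) hf
      have hfin := hg.finrank_eq_eRank hsp
      have h2 : 2 ≤ M.eRank := Order.add_one_le_of_lt hgt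
      rw [hk.points_eq h2, ← hk.rank_eq_add (hfin ▸ ENat.natCast_ne_top _) hgt.le,
        rank_eq_toNat_eRank, ← hfin, ENat.toNat_natCast, ← ncard_setOf_finrank_eq_one]
      exact hg.ncard_points_le
  · have hrep : IsRep F P f := hf
    have hP : P.eRank = (n + k : ℕ) := by
      rw [← hrep.finrank_eq_eRank (span_image_eq_top_of_forall_smul hsurj),
        Module.finrank_fin_fun]
    have h2 : 2 ≤ M.eRank := by
      rw [hk.eRank_eq, hP]
      exact_mod_cast (by omega : 2 ≤ n + k - k)
    rw [hk.points_eq h2, hrep.ncard_points_eq hsurj, ncard_setOf_finrank_eq_one,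
      Module.finrank_fin_fun]

end GrowthRate
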